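/- arXiv:2601.02664 — 2 statements merged into one kernel-verified Lean document; each statement's English description precedes it below -/
import Mathlib

section
/- Let p be a prime, q a power of p, and m a positive integer with p ∤ m. Then T^2 + 4 and the Fibonacci polynomial F_m(T) are coprime in F_q[T]. -/
/-!
If `t² = -4` (and `2` is invertible), the recurrence `F_{n+2} = t F_{n+1} + F_n` has the double
characteristic root `α = t / 2` with `α² = -1`, so `F_n(t) = n αⁿ⁻¹` and `F_n(t)² = (-1)^(n+1) n²`.
The squared identity holds in every commutative ring and gives
`T² + 4 ∣ F_m² - (-1)^(m+1) m²`; when `p ∤ m` the constant is a unit, which forces coprimality.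
-/

open Polynomial

noncomputable def fibPoly (R : Type*) [CommRing R] : ℕ → Polynomial R
  | 0 => 0
  | 1 => 1
  | n + 2 => Polynomial.X * fibPoly R (n + 1) + fibPoly R n

section aeval

variable {R A : Type*} [CommRing R] [CommRing A] [Algebra R A]

@[simp]
theorem aeval_fibPoly_zero (t : A) : aeval t (fibPoly R 0) = 0 := by
  simp [fibPoly]

@[simp]
theorem aeval_fibPoly_one (t : A) : aeval t (fibPoly R 1) = 1 := by
  simp [fibPoly]

theorem aeval_fibPoly_add_two (t : A) (n : ℕ) :
    aeval t (fibPoly R (n + 2)) = t * aeval t (fibPoly R (n + 1)) + aeval t (fibPoly R n) := by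
  simp [fibPoly]

/-- The last conjunct is the cross term needed to propagate the squares through the recurrence. -/
theorem aeval_fibPoly_sq_and_of_sq_add_four_eq_zero {t : A} (ht : t ^ 2 + 4 = 0) (n : ℕ) :
    aeval t (fibPoly R n) ^ 2 = (-1) ^ (n + 1) * (n : A) ^ 2 ∧
      aeval t (fibPoly R (n + 1)) ^ 2 = (-1) ^ n * ((n : A) + 1) ^ 2 ∧
      2 * aeval t (fibPoly R (n + 1)) * aeval t (fibPoly R n) =
        (-1) ^ (n + 1) * (n : A) * ((n : A) + 1) * t := by
  induction n with
  | zero => simp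
  | succ n ih =>
    obtain ⟨hprev, hsq, hcross⟩ := ih
    have hrec := aeval_fibPoly_add_two (R := R) t n
    refine ⟨by push_cast; linear_combination hsq, ?_, ?_⟩
    · push_cast
      linear_combination (aeval t (fibPoly R (n + 2)) + t * aeval t (fibPoly R (n + 1)) +
          aeval t (fibPoly R n)) * hrec + t ^ 2 * hsq + t * hcross +
        hprev + (-1) ^ n * ((n : A) + 1) * ht
    · push_cast
      linear_combination 2 * aeval t (fibPoly R (n + 1)) * hrec + 2 * t * hsq + hcross

theorem aeval_fibPoly_sq_of_sq_add_four_eq_zero {t : A} (ht : t ^ 2 + 4 = 0) (n : ℕ) :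
    aeval t (fibPoly R n) ^ 2 = (-1) ^ (n + 1) * (n : A) ^ 2 :=
  (aeval_fibPoly_sq_and_of_sq_add_four_eq_zero ht n).1

end aeval

theorem X_sq_add_four_dvd_fibPoly_sq_sub (R : Type*) [CommRing R] (n : ℕ) :
    (X ^ 2 + C 4 : R[X]) ∣ fibPoly R n ^ 2 - (-1) ^ (n + 1) * (n : R[X]) ^ 2 := by
  rw [← AdjoinRoot.mk_eq_mk]
  have hroot : AdjoinRoot.root (X ^ 2 + C 4 : R[X]) ^ 2 + 4 = 0 := by
    have h := AdjoinRoot.mk_self (f := (X ^ 2 + C 4 : R[X]))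
    rwa [map_add, map_pow, AdjoinRoot.mk_X, AdjoinRoot.mk_C, map_ofNat] at h
  simpa [AdjoinRoot.aeval_eq] using aeval_fibPoly_sq_of_sq_add_four_eq_zero (R := R) hroot n

theorem isCoprime_of_dvd_sq_sub_isUnit {R : Type*} [CommRing R] {a b u : R} (hu : IsUnit u)
    (h : a ∣ b ^ 2 - u) : IsCoprime a b := by
  obtain ⟨v, rfl⟩ := hu
  obtain ⟨k, hk⟩ := h
  refine ⟨-↑v⁻¹ * k, ↑v⁻¹ * b, ?_⟩
  linear_combination (↑v⁻¹ : R) * hk + Units.inv_mul v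

theorem fib_poly_coprime_X_sq_add_four_general (p : ℕ)
    (F : Type*) [Field F] [CharP F p] (m : ℕ) (hpm : ¬ p ∣ m) :
    IsCoprime (X ^ 2 + C 4 : Polynomial F) (fibPoly F m) := by
  have hm : (m : F) ≠ 0 := by rwa [Ne, CharP.cast_eq_zero_iff F p]
  have hunit : IsUnit ((-1) ^ (m + 1) * (m : F[X]) ^ 2) := by
    rw [← map_natCast C]
    exact (isUnit_neg_one.pow _).mul ((isUnit_C.mpr hm.isUnit).pow _)
  exact isCoprime_of_dvd_sq_sub_isUnit hunit (X_sq_add_four_dvd_fibPoly_sq_sub F m)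

theorem fib_poly_coprime_X_sq_add_four (p : ℕ) [Fact p.Prime]
    (F : Type*) [Field F] [Fintype F] [CharP F p] (m : ℕ) (hm : 0 < m) (hpm : ¬ p ∣ m) :
    IsCoprime (X ^ 2 + C 4 : Polynomial F) (fibPoly F m) :=
  fib_poly_coprime_X_sq_add_four_general p F m hpm
end

section
/- Let q be a power of 2 and k ≥ 1 a natural number. Then in F_q[T], F_{2k}(T) = T·F_k(T)^2 and F_{2k+1}(T) = (F_{k+1}(T) + F_k(T))^2. -/
/-!
The Fibonacci polynomials satisfy the addition formula `F (m + n + 1) = F (m + 1) F (n + 1) + F m F n`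
over any commutative ring. With `m = n = k` it gives `F (2k + 1) = F (k + 1)² + F k²`, and with
`m = k, n = k - 1` it gives `F (2k) = F k (2 F (k + 1) - X F k)`. In characteristic two the first sum of
squares is the square of a sum, and the second factor reduces to `X F k`.
-/

open Polynomial

section CommRing

variable {R : Type*} [CommRing R]

theorem fibPoly_add_two (n : ℕ) :
    fibPoly R (n + 2) = X * fibPoly R (n + 1) + fibPoly R n := rfl

theorem fibPoly_add_add_one (m : ℕ) : ∀ n : ℕ,
    fibPoly R (m + n + 1) = fibPoly R (m + 1) * fibPoly R (n + 1) + fibPoly R m * fibPoly R n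
  | 0 => by simp [fibPoly]
  | 1 => by rw [fibPoly_add_two m]; simp [fibPoly, mul_comm]
  | n + 2 => by
    rw [show m + (n + 2) + 1 = m + n + 1 + 2 by ring, fibPoly_add_two, fibPoly_add_two n,
      fibPoly_add_two (n + 1), show m + n + 1 + 1 = m + (n + 1) + 1 by ring,
      fibPoly_add_add_one m (n + 1), fibPoly_add_add_one m n]
    ring

theorem fibPoly_two_mul_add_one (k : ℕ) :
    fibPoly R (2 * k + 1) = fibPoly R (k + 1) ^ 2 + fibPoly R k ^ 2 := by
  rw [two_mul, fibPoly_add_add_one]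
  ring

theorem fibPoly_two_mul (k : ℕ) :
    fibPoly R (2 * k) = fibPoly R k * (2 * fibPoly R (k + 1) - X * fibPoly R k) := by
  cases k with
  | zero => simp [fibPoly]
  | succ j =>
    rw [show 2 * (j + 1) = j + 1 + j + 1 by ring, fibPoly_add_add_one, fibPoly_add_two]
    ring

end CommRing

theorem fib_poly_double_char_two_general (F : Type*) [Field F] [CharP F 2]
    (k : ℕ) :
    fibPoly F (2 * k) = X * (fibPoly F k) ^ 2 ∧
      fibPoly F (2 * k + 1) = (fibPoly F (k + 1) + fibPoly F k) ^ 2 := by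
  have two_eq_zero : (2 : F[X]) = 0 := CharTwo.two_eq_zero
  constructor
  · rw [fibPoly_two_mul, two_eq_zero, zero_mul, zero_sub, mul_neg, CharTwo.neg_eq]
    ring
  · rw [fibPoly_two_mul_add_one, CharTwo.add_sq]

theorem fib_poly_double_char_two (F : Type*) [Field F] [Fintype F] [CharP F 2]
    (k : ℕ) (hk : 1 ≤ k) :
    fibPoly F (2 * k) = X * (fibPoly F k) ^ 2 ∧
      fibPoly F (2 * k + 1) = (fibPoly F (k + 1) + fibPoly F k) ^ 2 :=
  fib_poly_double_char_two_general F k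
end
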